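/- Coordinatewise decomposition of the Rademacher complexity of a Lipschitz-composed vector-valued class (equation (28)): let X be a set, x₁, …, x_M ∈ X, let H be a nonempty set of functions from X to ℝ^N such that for each m the set {h(x_m) : h ∈ H} ⊆ ℝ^N is bounded, and for each m let ψ_m : ℝ^N → ℝ be C-Lipschitz with respect to the Euclidean norm. Then E_ξ[ sup_{h ∈ H} Σ_{m=1}^M ξ_m ψ_m(h(x_m)) ] ≤ √2 · C · Σ_{j=1}^N E_ξ[ sup_{h ∈ H} Σ_{m=1}^M ξ_m (h(x_m))_j ], where ξ is uniform over {−1,+1}^M in each expectation. -/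

import Mathlib

/-- The real sign `+1`/`−1` associated with a Boolean, used to enumerate sign vectors
`ξ ∈ {−1, +1}^I` as functions `I → Bool`. -/
noncomputable def sgn (b : Bool) : ℝ := if b then 1 else -1

/-!
Maurer's vector-contraction argument. For one sign `b` in front of a `C`-Lipschitz `ψ`, the two
values of `b` pair a maximiser `h` with a maximiser `h'`, and
`ψ (w h) - ψ (w h') ≤ C ‖w h - w h'‖ ≤ √2 C 𝔼_τ |∑ⱼ τⱼ (w h - w h')ⱼ|` by Szarek's sharp
Khintchine inequality; the symmetry `τ ↦ -τ` recombines the pair into `2 𝔼_τ sup_h` of the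
process with independent signs on the coordinates. Replacing the signs one index at a time and
bounding the supremum of the sum over coordinates by the sum of the suprema gives the inequality
for finite classes; a general class is reduced to the finite class of near-maximisers of the
finitely many sign vectors.

Szarek's inequality follows Latała–Oleszkiewicz: `f = |∑ⱼ εⱼ uⱼ|` is even and `L f ≤ f` for the
Laplacian `L` of the cube. On even functions `L` has spectral gap `2` (their Walsh expansion
lives on sets of even size), so `𝔼 f² ≤ 2 (𝔼 f)²`, while `𝔼 f² = ‖u‖²`.
-/

open Finset
open scoped BigOperators NNReal

lemma expect_bool (f : Bool → ℝ) :
    𝔼 b, f b = (f true + f false) / 2 := by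
  rw [Fintype.expect_eq_sum_div_card, Fintype.sum_bool, Fintype.card_bool, Nat.cast_ofNat]

lemma expect_pi_fin_succ {β : Type*} [Fintype β] {n : ℕ} (f : (Fin (n + 1) → β) → ℝ) :
    𝔼 x, f x = 𝔼 a, 𝔼 x : Fin n → β, f (Fin.cons a x) := by
  rw [← expect_product', univ_product_univ]
  exact Fintype.expect_equiv (Fin.consEquiv fun _ => β).symm _ _ fun x => by
    simp [Fin.consEquiv]

lemma expect_comp_eval {κ γ : Type*} [Fintype κ] [DecidableEq κ] [Fintype γ] (j : κ)
    (g : γ → ℝ) : 𝔼 ζ : κ → γ, g (ζ j) = 𝔼 c, g c := by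
  rw [Fintype.expect_equiv (Equiv.piSplitAt j fun _ => γ) (fun ζ => g (ζ j)) (fun p => g p.1)
    fun _ => rfl,
    ← univ_product_univ, expect_product' univ univ fun c _ => g c]
  cases isEmpty_or_nonempty γ <;> simp

lemma expect_comp_column {α κ β : Type*} [Fintype α] [DecidableEq α] [Fintype κ]
    [DecidableEq κ] [Fintype β] (j : κ) (g : (α → β) → ℝ) :
    𝔼 η : α → κ → β, g (fun a => η a j) = 𝔼 ε, g ε := by
  rw [Fintype.expect_equiv (Equiv.piComm fun _ _ => β) (fun η => g fun a => η a j)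
    (fun ζ => g (ζ j)) fun _ => rfl,
    expect_comp_eval]

lemma expect_ciSup_le {σ ι : Type*} [Fintype σ] [Nonempty ι] {F : σ → ι → ℝ} {a : ℝ}
    (h : ∀ s : σ → ι, 𝔼 e, F e (s e) ≤ a) : 𝔼 e, ⨆ i, F e i ≤ a := by
  rcases isEmpty_or_nonempty σ with hσ | hσ
  · simpa using h isEmptyElim
  refine le_of_forall_pos_le_add fun δ hδ => ?_
  choose s hs using fun e => exists_lt_of_lt_ciSup (sub_lt_self (⨆ i, F e i) hδ)
  calc 𝔼 e, ⨆ i, F e i ≤ 𝔼 e, (F e (s e) + δ) :=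
        expect_le_expect fun e _ => by linarith [hs e]
    _ ≤ a + δ := by rw [expect_add_distrib, Fintype.expect_const]; linarith [h s]

@[simp] lemma sgn_true : sgn true = 1 := if_pos rfl

@[simp] lemma sgn_false : sgn false = -1 := if_neg Bool.false_ne_true

lemma sgn_not (b : Bool) : sgn (!b) = -sgn b := by cases b <;> simp [sgn]

lemma sgn_mul_self (b : Bool) : sgn b * sgn b = 1 := by cases b <;> simp [sgn]

lemma abs_sgn (b : Bool) : |sgn b| = 1 := by cases b <;> simp [sgn]

lemma sgn_mul_sgn_add_one (a b : Bool) : sgn a * sgn b + 1 = if a = b then 2 else 0 := by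
  cases a <;> cases b <;> norm_num [sgn]

namespace BooleanCube

variable {κ : Type*}

noncomputable def walsh (A : Finset κ) (ε : κ → Bool) : ℝ := ∏ i ∈ A, sgn (ε i)

lemma walsh_not (A : Finset κ) (ε : κ → Bool) :
    walsh A (fun i => !ε i) = (-1) ^ A.card * walsh A ε := by
  rw [walsh, walsh, ← prod_const, ← prod_mul_distrib]
  exact prod_congr rfl fun i _ => by rw [sgn_not, neg_one_mul]

variable [DecidableEq κ]

def flipAt (i : κ) (ε : κ → Bool) : κ → Bool := Function.update ε i (!ε i)

lemma flipAt_involutive (i : κ) : Function.Involutive (flipAt i) := by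
  intro ε
  ext j
  by_cases h : j = i
  · subst h; simp [flipAt]
  · simp [flipAt, Function.update_of_ne h]

lemma walsh_flipAt (A : Finset κ) (i : κ) (ε : κ → Bool) :
    walsh A (flipAt i ε) = (if i ∈ A then -1 else 1) * walsh A ε := by
  split_ifs with h
  · have hoff : ∀ j ∈ A.erase i, sgn (flipAt i ε j) = sgn (ε j) := fun j hj => by
      rw [flipAt, Function.update_of_ne (ne_of_mem_erase hj)]
    rw [walsh, walsh, ← mul_prod_erase A _ h, ← mul_prod_erase A _ h, prod_congr rfl hoff,
      flipAt, Function.update_self, sgn_not]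
    ring
  · rw [one_mul, walsh, walsh]
    refine prod_congr rfl fun j hj => ?_
    rw [flipAt, Function.update_of_ne (ne_of_mem_of_not_mem hj h)]

variable [Fintype κ]

noncomputable def walshCoeff (f : (κ → Bool) → ℝ) (A : Finset κ) : ℝ := 𝔼 ε, f ε * walsh A ε

lemma sum_walsh_mul_walsh (ε ε' : κ → Bool) :
    ∑ A, walsh A ε * walsh A ε' = if ε = ε' then (Fintype.card (κ → Bool) : ℝ) else 0 := by
  simp_rw [walsh, ← prod_mul_distrib]
  rw [← powerset_univ, ← prod_add_one]
  simp_rw [sgn_mul_sgn_add_one]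
  split_ifs with h
  · simp [h]
  · obtain ⟨i, hi⟩ := Function.ne_iff.mp h
    exact prod_eq_zero (mem_univ i) (if_neg hi)

theorem expect_mul_eq_sum_walshCoeff_mul (f g : (κ → Bool) → ℝ) :
    𝔼 ε, f ε * g ε = ∑ A, walshCoeff f A * walshCoeff g A := by
  simp_rw [walshCoeff, expect_mul_expect, ← expect_sum_comm]
  refine expect_congr rfl fun ε _ => ?_
  have : ∀ ε', ∑ A, f ε * walsh A ε * (g ε' * walsh A ε')
      = (if ε = ε' then (Fintype.card (κ → Bool) : ℝ) else 0) * (f ε * g ε') := by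
    intro ε'
    rw [← sum_walsh_mul_walsh, sum_mul]
    exact sum_congr rfl fun A _ => by ring
  simp_rw [this, expect_boole_mul]

lemma expect_comp_flipAt (i : κ) (g : (κ → Bool) → ℝ) : 𝔼 ε, g (flipAt i ε) = 𝔼 ε, g ε :=
  Fintype.expect_bijective _ (flipAt_involutive i).bijective _ _ fun _ => rfl

lemma expect_comp_not (g : (κ → Bool) → ℝ) : 𝔼 ε : κ → Bool, g (fun i => !ε i) = 𝔼 ε, g ε :=
  Fintype.expect_bijective _ (Function.Involutive.bijective fun (ε : κ → Bool) => by simp)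
    _ _ fun _ => rfl

lemma walshCoeff_comp_flipAt (f : (κ → Bool) → ℝ) (i : κ) (A : Finset κ) :
    walshCoeff (fun ε => f (flipAt i ε)) A = (if i ∈ A then -1 else 1) * walshCoeff f A := by
  rw [walshCoeff, walshCoeff, mul_expect, ← expect_comp_flipAt i]
  refine expect_congr rfl fun ε _ => ?_
  rw [flipAt_involutive i ε, walsh_flipAt]
  ring

lemma walshCoeff_eq_zero_of_odd {f : (κ → Bool) → ℝ} (hf : ∀ ε, f (fun i => !ε i) = f ε)
    {A : Finset κ} (hA : Odd A.card) : walshCoeff f A = 0 := by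
  have h : walshCoeff f A = -walshCoeff f A := by
    conv_lhs => rw [walshCoeff, ← expect_comp_not]
    simp_rw [hf, walsh_not, hA.neg_one_pow, walshCoeff, ← expect_neg_distrib]
    ring_nf
  linarith

noncomputable def laplacian (f : (κ → Bool) → ℝ) (ε : κ → Bool) : ℝ :=
  (∑ i, (f ε - f (flipAt i ε))) / 2

lemma walshCoeff_laplacian (f : (κ → Bool) → ℝ) (A : Finset κ) :
    walshCoeff (laplacian f) A = A.card * walshCoeff f A := by
  have h : ∀ i, walshCoeff f A - walshCoeff (fun ε => f (flipAt i ε)) A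
      = if i ∈ A then 2 * walshCoeff f A else 0 := fun i => by
    rw [walshCoeff_comp_flipAt]; split_ifs <;> ring
  calc walshCoeff (laplacian f) A
      = (∑ i, (walshCoeff f A - walshCoeff (fun ε => f (flipAt i ε)) A)) / 2 := by
        simp only [walshCoeff, laplacian, ← expect_sub_distrib, sum_div, sum_mul, ← expect_div,
          expect_sum_comm, sub_mul, div_mul_eq_mul_div]
    _ = A.card * walshCoeff f A := by
        simp_rw [h, sum_ite_mem, univ_inter, sum_const, nsmul_eq_mul]
        ring

lemma walshCoeff_empty (f : (κ → Bool) → ℝ) : walshCoeff f ∅ = 𝔼 ε, f ε := by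
  simp [walshCoeff, walsh]

/-- Latała–Oleszkiewicz. -/
theorem expect_sq_le_two_mul_sq_expect {f : (κ → Bool) → ℝ} (hf0 : ∀ ε, 0 ≤ f ε)
    (heven : ∀ ε, f (fun i => !ε i) = f ε) (hL : ∀ ε, laplacian f ε ≤ f ε) :
    𝔼 ε, f ε ^ 2 ≤ 2 * (𝔼 ε, f ε) ^ 2 := by
  have hparseval : 𝔼 ε, f ε ^ 2 = ∑ A, walshCoeff f A ^ 2 := by
    simp_rw [sq, expect_mul_eq_sum_walshCoeff_mul]
  have hdirichlet : ∑ A : Finset κ, A.card * walshCoeff f A ^ 2 ≤ 𝔼 ε, f ε ^ 2 :=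
    calc ∑ A : Finset κ, A.card * walshCoeff f A ^ 2 = 𝔼 ε, f ε * laplacian f ε := by
          simp_rw [expect_mul_eq_sum_walshCoeff_mul, walshCoeff_laplacian]
          exact sum_congr rfl fun A _ => by ring
      _ ≤ 𝔼 ε, f ε ^ 2 :=
          expect_le_expect fun ε _ => by rw [sq]; exact mul_le_mul_of_nonneg_left (hL ε) (hf0 ε)
  have hgap : ∀ A : Finset κ, 2 * walshCoeff f A ^ 2
      ≤ A.card * walshCoeff f A ^ 2 + if A = ∅ then 2 * walshCoeff f ∅ ^ 2 else 0 := by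
    intro A
    rcases A.eq_empty_or_nonempty with rfl | hA
    · simp
    rcases Nat.even_or_odd A.card with ⟨k, hk⟩ | hodd
    · have : (2 : ℝ) ≤ A.card := by
        have := hA.card_pos
        exact_mod_cast (by omega : 2 ≤ A.card)
      rw [if_neg hA.ne_empty, add_zero]
      exact mul_le_mul_of_nonneg_right this (sq_nonneg _)
    · simp [walshCoeff_eq_zero_of_odd heven hodd, hA.ne_empty]
  have hsum := sum_le_sum fun A (_ : A ∈ univ) => hgap A
  rw [sum_add_distrib, sum_ite_eq' univ ∅, if_pos (mem_univ _), ← mul_sum,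
    walshCoeff_empty] at hsum
  linarith

lemma expect_sgn_mul_sgn (i k : κ) :
    𝔼 ε : κ → Bool, sgn (ε i) * sgn (ε k) = if i = k then 1 else 0 := by
  split_ifs with h
  · simp [h, sgn_mul_self]
  · have hflip := expect_comp_flipAt i fun ε => sgn (ε i) * sgn (ε k)
    simp only [flipAt, Function.update_self, Function.update_of_ne (Ne.symm h), sgn_not,
      neg_mul, expect_neg_distrib] at hflip
    linarith

lemma expect_sq_sum_sgn_mul (c : κ → ℝ) :
    𝔼 ε : κ → Bool, (∑ j, sgn (ε j) * c j) ^ 2 = ∑ j, c j ^ 2 := by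
  have h : ∀ ε : κ → Bool, (∑ j, sgn (ε j) * c j) ^ 2
      = ∑ j, ∑ k, c j * c k * (sgn (ε j) * sgn (ε k)) := fun ε => by
    rw [sq, sum_mul_sum]
    exact sum_congr rfl fun j _ => sum_congr rfl fun k _ => by ring
  simp_rw [h, expect_sum_comm, ← mul_expect, expect_sgn_mul_sgn, mul_ite, mul_one, mul_zero,
    sum_ite_eq, if_pos (mem_univ _), sq]

lemma sum_sgn_mul_flipAt (c : κ → ℝ) (i : κ) (ε : κ → Bool) :
    ∑ j, sgn (flipAt i ε j) * c j = ∑ j, sgn (ε j) * c j - 2 * (sgn (ε i) * c i) := by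
  rw [← add_sum_erase _ _ (mem_univ i), ← add_sum_erase _ _ (mem_univ i),
    sum_congr rfl fun j hj => by rw [flipAt, Function.update_of_ne (ne_of_mem_erase hj)],
    flipAt, Function.update_self, sgn_not]
  ring

lemma laplacian_abs_sum_sgn_mul_le (c : κ → ℝ) (ε : κ → Bool) :
    laplacian (fun ε => |∑ j, sgn (ε j) * c j|) ε ≤ |∑ j, sgn (ε j) * c j| := by
  set S := fun ε : κ → Bool => ∑ j, sgn (ε j) * c j
  have hflips : ∑ i, S (flipAt i ε) = (Fintype.card κ - 2) * S ε := by
    simp_rw [S, sum_sgn_mul_flipAt, sum_sub_distrib, sum_const, ← mul_sum, card_univ,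
      nsmul_eq_mul]
    ring
  have : (Fintype.card κ - 2) * |S ε| ≤ ∑ i, |S (flipAt i ε)| :=
    calc (Fintype.card κ - 2) * |S ε| ≤ |(Fintype.card κ - 2) * S ε| := by
          rw [abs_mul]; exact mul_le_mul_of_nonneg_right (le_abs_self _) (abs_nonneg _)
      _ = |∑ i, S (flipAt i ε)| := by rw [hflips]
      _ ≤ ∑ i, |S (flipAt i ε)| := abs_sum_le_sum_abs _ _
  simp only [laplacian, sum_sub_distrib, sum_const, card_univ, nsmul_eq_mul]
  linarith

/-- Szarek's sharp Khintchine inequality. -/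
theorem norm_le_sqrt_two_mul_expect_abs_sum_sgn_mul (u : EuclideanSpace ℝ κ) :
    ‖u‖ ≤ √2 * 𝔼 ε : κ → Bool, |∑ j, sgn (ε j) * u j| := by
  have heven : ∀ ε : κ → Bool, |∑ j, sgn (!ε j) * u j| = |∑ j, sgn (ε j) * u j| := fun ε => by
    simp_rw [sgn_not, neg_mul, sum_neg_distrib, abs_neg]
  have hLO := expect_sq_le_two_mul_sq_expect (fun ε => abs_nonneg _) heven
    (laplacian_abs_sum_sgn_mul_le u)
  simp_rw [sq_abs, expect_sq_sum_sgn_mul, ← EuclideanSpace.real_norm_sq_eq] at hLO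
  refine le_of_sq_le_sq ?_ (by positivity)
  rwa [mul_pow, Real.sq_sqrt zero_le_two]

end BooleanCube

open BooleanCube

section Contraction

variable {ι κ : Type*} [Finite ι] [Nonempty ι] [Fintype κ] [DecidableEq κ]

theorem expect_iSup_add_sgn_mul_le {C : ℝ≥0} {ψ : EuclideanSpace ℝ κ → ℝ}
    (hψ : LipschitzWith C ψ) (A : ι → ℝ) (w : ι → EuclideanSpace ℝ κ) :
    𝔼 b : Bool, ⨆ h, (A h + sgn b * ψ (w h))
      ≤ 𝔼 τ : κ → Bool, ⨆ h, (A h + √2 * C * ∑ j, sgn (τ j) * w h j) := by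
  set K : ℝ := √2 * C
  have hK : 0 ≤ K := by positivity
  set F := fun τ : κ → Bool => ⨆ h, (A h + K * ∑ j, sgn (τ j) * w h j)
  have hF : ∀ (τ : κ → Bool) h, A h + K * ∑ j, sgn (τ j) * w h j ≤ F τ := fun τ h =>
    le_ciSup (Finite.bddAbove_range (fun h => A h + K * ∑ j, sgn (τ j) * w h j)) h
  have hneg : ∀ (τ : κ → Bool) h, A h - K * ∑ j, sgn (τ j) * w h j ≤ F (fun j => !τ j) :=
    fun τ h => by simpa [sgn_not, sum_neg_distrib, sub_eq_add_neg] using hF (fun j => !τ j) h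
  have hpair : ∀ h h', A h + ψ (w h) + (A h' - ψ (w h')) ≤ 2 * 𝔼 τ, F τ := by
    intro h h'
    have hlip : ψ (w h) - ψ (w h') ≤ C * ‖w h - w h'‖ := by
      rw [← dist_eq_norm]
      exact (le_abs_self _).trans ((Real.dist_eq _ _).symm.trans_le (hψ.dist_le_mul _ _))
    calc A h + ψ (w h) + (A h' - ψ (w h'))
        ≤ A h + A h' + C * (√2 * 𝔼 τ : κ → Bool, |∑ j, sgn (τ j) * (w h - w h') j|) := by
          have := mul_le_mul_of_nonneg_left
            (norm_le_sqrt_two_mul_expect_abs_sum_sgn_mul (w h - w h')) C.coe_nonneg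
          linarith
      _ = 𝔼 τ : κ → Bool, (A h + A h'
            + |K * ∑ j, sgn (τ j) * w h j - K * ∑ j, sgn (τ j) * w h' j|) := by
          simp_rw [← mul_sub, ← sum_sub_distrib, ← mul_sub, abs_mul, abs_of_nonneg hK,
            expect_add_distrib, Fintype.expect_const, ← mul_expect, WithLp.ofLp_sub, Pi.sub_apply,
            K]
          ring
      _ ≤ 𝔼 τ, (F τ + F (fun j => !τ j)) := by
          refine expect_le_expect fun τ _ => ?_
          have := hF τ h; have := hF τ h'; have := hneg τ h; have := hneg τ h'
          cases abs_cases (K * ∑ j, sgn (τ j) * w h j - K * ∑ j, sgn (τ j) * w h' j) <;>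
            linarith
      _ = 2 * 𝔼 τ, F τ := by
          rw [expect_add_distrib, expect_comp_not F]
          ring
  rw [expect_bool]
  have := ciSup_add_ciSup_le hpair
  simp only [sgn_true, sgn_false, one_mul, neg_one_mul, ← sub_eq_add_neg]
  linarith

/-- Maurer's vector-contraction inequality; the offset `A` lets the induction on `M` absorb the
remaining indices. -/
theorem expect_iSup_add_sum_sgn_mul_le {C : ℝ≥0} {M : ℕ} {ψ : Fin M → EuclideanSpace ℝ κ → ℝ}
    (hψ : ∀ m, LipschitzWith C (ψ m)) (A : ι → ℝ) (v : ι → Fin M → EuclideanSpace ℝ κ) :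
    𝔼 ε : Fin M → Bool, ⨆ h, (A h + ∑ m, sgn (ε m) * ψ m (v h m))
      ≤ 𝔼 η : Fin M → κ → Bool, ⨆ h, (A h + √2 * C * ∑ m, ∑ j, sgn (η m j) * v h m j) := by
  induction M generalizing A with
  | zero => simp
  | succ M ih =>
    set K : ℝ := √2 * C
    calc 𝔼 ε : Fin (M + 1) → Bool, ⨆ h, (A h + ∑ m, sgn (ε m) * ψ m (v h m))
        = 𝔼 b : Bool, 𝔼 ε : Fin M → Bool, ⨆ h, ((A h + sgn b * ψ 0 (v h 0))
            + ∑ m, sgn (ε m) * ψ m.succ (v h m.succ)) := by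
          simp_rw [expect_pi_fin_succ, Fin.sum_univ_succ, Fin.cons_zero, Fin.cons_succ, add_assoc]
      _ ≤ 𝔼 b : Bool, 𝔼 η : Fin M → κ → Bool, ⨆ h, ((A h + sgn b * ψ 0 (v h 0))
            + K * ∑ m, ∑ j, sgn (η m j) * v h m.succ j) :=
          expect_le_expect fun b _ => ih (fun m => hψ m.succ) _ (fun h m => v h m.succ)
      _ = 𝔼 η : Fin M → κ → Bool, 𝔼 b : Bool, ⨆ h, ((A h
            + K * ∑ m, ∑ j, sgn (η m j) * v h m.succ j) + sgn b * ψ 0 (v h 0)) := by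
          rw [expect_comm]
          simp_rw [add_right_comm]
      _ ≤ 𝔼 η : Fin M → κ → Bool, 𝔼 τ : κ → Bool, ⨆ h, ((A h
            + K * ∑ m, ∑ j, sgn (η m j) * v h m.succ j) + K * ∑ j, sgn (τ j) * v h 0 j) :=
          expect_le_expect fun η _ => expect_iSup_add_sgn_mul_le (hψ 0) _ _
      _ = 𝔼 η : Fin (M + 1) → κ → Bool, ⨆ h, (A h + K * ∑ m, ∑ j, sgn (η m j) * v h m j) := by
          rw [expect_comm, expect_pi_fin_succ]
          simp_rw [Fin.sum_univ_succ, Fin.cons_zero, Fin.cons_succ, mul_add, add_right_comm,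
            add_assoc]

theorem expect_iSup_sum_sgn_mul_le_sum {C : ℝ≥0} {M : ℕ} {ψ : Fin M → EuclideanSpace ℝ κ → ℝ}
    (hψ : ∀ m, LipschitzWith C (ψ m)) (v : ι → Fin M → EuclideanSpace ℝ κ) :
    𝔼 ε : Fin M → Bool, ⨆ h, ∑ m, sgn (ε m) * ψ m (v h m)
      ≤ √2 * C * ∑ j, 𝔼 ε : Fin M → Bool, ⨆ h, ∑ m, sgn (ε m) * v h m j := by
  set K : ℝ := √2 * C
  have hK : 0 ≤ K := by positivity
  calc 𝔼 ε : Fin M → Bool, ⨆ h, ∑ m, sgn (ε m) * ψ m (v h m)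
      ≤ 𝔼 η : Fin M → κ → Bool, ⨆ h, K * ∑ m, ∑ j, sgn (η m j) * v h m j := by
        simpa using expect_iSup_add_sum_sgn_mul_le hψ 0 v
    _ ≤ 𝔼 η : Fin M → κ → Bool, K * ∑ j, ⨆ h, ∑ m, sgn (η m j) * v h m j := by
        refine expect_le_expect fun η _ => ciSup_le fun h => ?_
        rw [sum_comm]
        exact mul_le_mul_of_nonneg_left
          (sum_le_sum fun j _ =>
            le_ciSup (Finite.bddAbove_range fun h => ∑ m, sgn (η m j) * v h m j) h) hK
    _ = K * ∑ j, 𝔼 ε : Fin M → Bool, ⨆ h, ∑ m, sgn (ε m) * v h m j := by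
        simp_rw [← mul_expect, expect_sum_comm]
        exact congrArg (K * ·) <| sum_congr rfl fun j _ =>
          expect_comp_column j fun ε : Fin M → Bool => ⨆ h, ∑ m, sgn (ε m) * v h m j

end Contraction

lemma bddAbove_range_sum_sgn_mul_apply {X μ κ : Type*} [Fintype μ] [Fintype κ] {x : μ → X}
    {H : Set (X → EuclideanSpace ℝ κ)} (hbdd : ∀ m, Bornology.IsBounded ((fun h => h (x m)) '' H))
    (ε : μ → Bool) (j : κ) : BddAbove (Set.range fun h : H => ∑ m, sgn (ε m) * h.1 (x m) j) := by
  choose R hR using fun m => (hbdd m).exists_norm_le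
  refine ⟨∑ m, R m, Set.forall_mem_range.2 fun h => sum_le_sum fun m _ => ?_⟩
  calc sgn (ε m) * h.1 (x m) j ≤ |sgn (ε m) * h.1 (x m) j| := le_abs_self _
    _ = ‖h.1 (x m) j‖ := by rw [abs_mul, abs_sgn, one_mul, Real.norm_eq_abs]
    _ ≤ ‖h.1 (x m)‖ := PiLp.norm_apply_le _ _
    _ ≤ R m := hR m _ (Set.mem_image_of_mem _ h.2)

/-- Coordinatewise decomposition of the Rademacher complexity of a Lipschitz-composed
vector-valued class (equation (28)):
`E_ξ[sup_h Σ_m ξ_m ψ_m(h(x_m))] ≤ √2 C Σ_j E_ξ[sup_h Σ_m ξ_m (h(x_m))_j]`,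
where each `ψ_m : ℝ^N → ℝ` is `C`-Lipschitz in the Euclidean norm and `ξ` is uniform over
`{−1,+1}^M` in each expectation. -/
theorem rademacher_coordinatewise_decomposition {X : Type*} {M N : ℕ} (x : Fin M → X)
    (H : Set (X → EuclideanSpace ℝ (Fin N))) (hH : H.Nonempty)
    (hbdd : ∀ m, Bornology.IsBounded ((fun h => h (x m)) '' H))
    (C : NNReal) (ψ : Fin M → EuclideanSpace ℝ (Fin N) → ℝ)
    (hψ : ∀ m, LipschitzWith C (ψ m)) :
    (2 ^ M : ℝ)⁻¹ *
        ∑ ε : Fin M → Bool, sSup ((fun h => ∑ m, sgn (ε m) * ψ m (h (x m))) '' H)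
      ≤ Real.sqrt 2 * (C : ℝ) *
        ∑ j : Fin N, (2 ^ M : ℝ)⁻¹ *
          ∑ ε : Fin M → Bool, sSup ((fun h => ∑ m, sgn (ε m) * (h (x m)) j) '' H) := by
  have : Nonempty H := hH.to_subtype
  have hexpect : ∀ f : (Fin M → Bool) → ℝ, (2 ^ M : ℝ)⁻¹ * ∑ ε, f ε = 𝔼 ε, f ε := fun f => by
    simp [Fintype.expect_eq_sum_div_card, div_eq_inv_mul]
  simp only [hexpect, sSup_image']
  -- `s` picks one element of `H` per sign vector, giving a finite class indexed by the signs.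
  refine expect_ciSup_le fun s => ?_
  calc 𝔼 ε : Fin M → Bool, ∑ m, sgn (ε m) * ψ m ((s ε).1 (x m))
      ≤ 𝔼 ε : Fin M → Bool, ⨆ e, ∑ m, sgn (ε m) * ψ m ((s e).1 (x m)) :=
        expect_le_expect fun ε _ =>
          le_ciSup (Finite.bddAbove_range fun e => ∑ m, sgn (ε m) * ψ m ((s e).1 (x m))) ε
    _ ≤ √2 * C * ∑ j, 𝔼 ε : Fin M → Bool, ⨆ e, ∑ m, sgn (ε m) * (s e).1 (x m) j :=
        expect_iSup_sum_sgn_mul_le_sum hψ fun e m => (s e).1 (x m)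
    _ ≤ √2 * C * ∑ j, 𝔼 ε : Fin M → Bool, ⨆ h : H, ∑ m, sgn (ε m) * h.1 (x m) j := by
        gcongr with j _ ε _
        exact ciSup_le fun e => le_ciSup (bddAbove_range_sum_sgn_mul_apply hbdd ε j) (s e)
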